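/- Let p ≥ 1, let a_{1k}, a_{2k}, a_{3k} ∈ ℝ (k = 1,…,p), let l, m, q : ℝ → ℝ and U, V, W : ℝ → ℝ be C¹ functions, and define u(s,t) = Σ_{k=1}^p a_{1k} l(s)^k U(t)^k, v(s,t) = Σ_{k=1}^p a_{2k} m(s)^k V(t)^k, w(s,t) = Σ_{k=1}^p a_{3k} q(s)^k W(t)^k. Suppose U(t₀) = V(t₀) = W(t₀) = 0, θ(s) = θ₀ − ∫₀ˢ τ(σ) dσ, and there is λ : ℝ → ℝ with λ(s) ≠ 0 such that a_{21} m(s) V'(t₀) = λ(s) sinh θ(s) and a_{31} q(s) W'(t₀) = λ(s) cosh θ(s) for all s. Then P(s,t₀) = r(s) for all s and the surface normal satisfies n(s,t₀) = λ(s)·(cosh θ(s)·N(s) + sinh θ(s)·B(s)) for all s. -/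

import Mathlib

noncomputable section

/-- Lorentzian inner product on Minkowski 3-space `ℝ₁³`. -/
def minkDot (X Y : ℝ × ℝ × ℝ) : ℝ := X.1 * Y.1 + X.2.1 * Y.2.1 - X.2.2 * Y.2.2

/-- Lorentzian vector product on Minkowski 3-space `ℝ₁³`. -/
def lcross (X Y : ℝ × ℝ × ℝ) : ℝ × ℝ × ℝ :=
  (X.2.1 * Y.2.2 - X.2.2 * Y.2.1, X.2.2 * Y.1 - X.1 * Y.2.2, X.2.1 * Y.1 - X.1 * Y.2.1)

/-- Lorentzian norm `‖X‖ = √|⟨X,X⟩|`. -/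
def mnorm (X : ℝ × ℝ × ℝ) : ℝ := Real.sqrt |minkDot X X|

private lemma lcross_swap (X Y : ℝ × ℝ × ℝ) : lcross X Y = -lcross Y X := by
  simp only [lcross, Prod.ext_iff, Prod.fst_neg, Prod.snd_neg]
  refine ⟨by ring, by ring, by ring⟩

private lemma lcross_expand (X A D : ℝ × ℝ × ℝ) (a b c : ℝ) :
    lcross X (a • X + b • A + c • D) = b • lcross X A + c • lcross X D := by
  simp only [lcross, Prod.ext_iff, Prod.fst_add, Prod.snd_add, Prod.smul_fst, Prod.smul_snd,
    smul_eq_mul]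
  refine ⟨by ring, by ring, by ring⟩

private lemma poly_hasDerivAt (p : ℕ) (hp : 1 ≤ p) (a : ℕ → ℝ) (c d : ℝ) (U : ℝ → ℝ)
    (t₀ : ℝ) (hU0 : U t₀ = 0) (hUd : HasDerivAt U d t₀) :
    HasDerivAt (fun t => ∑ k ∈ Finset.Icc 1 p, a k * c ^ k * U t ^ k) (a 1 * c * d) t₀ := by
  have h := HasDerivAt.fun_sum (u := Finset.Icc 1 p)
    (A := fun k t => a k * c ^ k * U t ^ k)
    (A' := fun k => a k * c ^ k * ((k : ℝ) * U t₀ ^ (k - 1) * d))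
    (fun k _ => (hUd.pow k).const_mul (a k * c ^ k))
  refine h.congr_deriv ?_
  rw [Finset.sum_eq_single_of_mem 1 (Finset.mem_Icc.2 ⟨le_rfl, hp⟩)]
  · simp [hU0]
  · intro k hk hne
    have hk2 : 2 ≤ k := lt_of_le_of_ne (Finset.mem_Icc.1 hk).1 (Ne.symm hne)
    have : k - 1 ≠ 0 := by omega
    simp [hU0, zero_pow this]



/-- Sufficient conditions in the polynomial form of the marching-scale functions. -/
theorem surface_pencil_polynomial_spacelike_timelikeNormal
    (r T N B : ℝ → ℝ × ℝ × ℝ) (κ τ : ℝ → ℝ)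
    (hr : ContDiff ℝ (⊤ : ℕ∞) r) (hT : ContDiff ℝ (⊤ : ℕ∞) T) (hN : ContDiff ℝ (⊤ : ℕ∞) N)
    (hB : ContDiff ℝ (⊤ : ℕ∞) B) (hκ : ContDiff ℝ (⊤ : ℕ∞) κ) (hτ : ContDiff ℝ (⊤ : ℕ∞) τ)
    (hrT : ∀ s, deriv r s = T s)
    (hT' : ∀ s, deriv T s = κ s • N s)
    (hN' : ∀ s, deriv N s = κ s • T s + τ s • B s)
    (hB' : ∀ s, deriv B s = τ s • N s)
    (hTT : ∀ s, minkDot (T s) (T s) = 1)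
    (hNN : ∀ s, minkDot (N s) (N s) = -1)
    (hBB : ∀ s, minkDot (B s) (B s) = 1)
    (hTN : ∀ s, minkDot (T s) (N s) = 0)
    (hTB : ∀ s, minkDot (T s) (B s) = 0)
    (hNB : ∀ s, minkDot (N s) (B s) = 0)
    (hTxN : ∀ s, lcross (T s) (N s) = B s)
    (hNxB : ∀ s, lcross (N s) (B s) = T s)
    (hBxT : ∀ s, lcross (B s) (T s) = -N s)
    (u v w : ℝ → ℝ → ℝ)
    (t₀ : ℝ) (P n : ℝ → ℝ → ℝ × ℝ × ℝ)
    (hP : ∀ s t, P s t = r s + u s t • T s + v s t • N s + w s t • B s)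
    (hn : ∀ s t, n s t = lcross (deriv (fun σ => P σ t) s) (deriv (fun t' => P s t') t))
    (p : ℕ) (hp : 1 ≤ p)
    (a1 a2 a3 : ℕ → ℝ)
    (l m q U V W : ℝ → ℝ)
    (hl : ContDiff ℝ 1 l) (hm : ContDiff ℝ 1 m) (hq : ContDiff ℝ 1 q)
    (hU : ContDiff ℝ 1 U) (hV : ContDiff ℝ 1 V) (hW : ContDiff ℝ 1 W)
    (hu : ∀ s t, u s t = ∑ k ∈ Finset.Icc 1 p, a1 k * l s ^ k * U t ^ k)
    (hv : ∀ s t, v s t = ∑ k ∈ Finset.Icc 1 p, a2 k * m s ^ k * V t ^ k)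
    (hw : ∀ s t, w s t = ∑ k ∈ Finset.Icc 1 p, a3 k * q s ^ k * W t ^ k)
    (hU0 : U t₀ = 0) (hV0 : V t₀ = 0) (hW0 : W t₀ = 0)
    (θ₀ : ℝ) (θ : ℝ → ℝ) (hθ : ∀ s, θ s = θ₀ - ∫ σ in (0:ℝ)..s, τ σ)
    (lam : ℝ → ℝ) (hlam : ∀ s, lam s ≠ 0)
    (hV' : ∀ s, a2 1 * m s * deriv V t₀ = lam s * Real.sinh (θ s))
    (hW' : ∀ s, a3 1 * q s * deriv W t₀ = lam s * Real.cosh (θ s)) :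
    ∀ s, P s t₀ = r s ∧
      n s t₀ = lam s • (Real.cosh (θ s) • N s + Real.sinh (θ s) • B s) := by
  intro s
  have hUd : HasDerivAt U (deriv U t₀) t₀ := (hU.differentiable one_ne_zero t₀).hasDerivAt
  have hVd : HasDerivAt V (deriv V t₀) t₀ := (hV.differentiable one_ne_zero t₀).hasDerivAt
  have hWd : HasDerivAt W (deriv W t₀) t₀ := (hW.differentiable one_ne_zero t₀).hasDerivAt
  have hzero : ∀ (a : ℕ → ℝ) (f g : ℝ → ℝ), g t₀ = 0 →
      ∑ k ∈ Finset.Icc 1 p, a k * f s ^ k * g t₀ ^ k = 0 := by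
    intro a f g hg
    refine Finset.sum_eq_zero fun k hk => ?_
    have : k ≠ 0 := by have := (Finset.mem_Icc.1 hk).1; omega
    simp [hg, zero_pow this]
  have hu0 : ∀ σ, u σ t₀ = 0 := fun σ => by
    rw [hu]
    refine Finset.sum_eq_zero fun k hk => ?_
    have : k ≠ 0 := by have := (Finset.mem_Icc.1 hk).1; omega
    simp [hU0, zero_pow this]
  have hv0 : ∀ σ, v σ t₀ = 0 := fun σ => by
    rw [hv]
    refine Finset.sum_eq_zero fun k hk => ?_
    have : k ≠ 0 := by have := (Finset.mem_Icc.1 hk).1; omega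
    simp [hV0, zero_pow this]
  have hw0 : ∀ σ, w σ t₀ = 0 := fun σ => by
    rw [hw]
    refine Finset.sum_eq_zero fun k hk => ?_
    have : k ≠ 0 := by have := (Finset.mem_Icc.1 hk).1; omega
    simp [hW0, zero_pow this]
  have hPt0 : (fun σ => P σ t₀) = r := funext fun σ => by
    rw [hP, hu0, hv0, hw0]; simp
  have hds : deriv (fun σ => P σ t₀) s = T s := by rw [hPt0, hrT]
  have h1 : HasDerivAt (fun t => u s t) (a1 1 * l s * deriv U t₀) t₀ := by
    have heq : (fun t => u s t) = fun t => ∑ k ∈ Finset.Icc 1 p, a1 k * l s ^ k * U t ^ k :=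
      funext (hu s)
    rw [heq]; exact poly_hasDerivAt p hp a1 (l s) _ U t₀ hU0 hUd
  have h2 : HasDerivAt (fun t => v s t) (a2 1 * m s * deriv V t₀) t₀ := by
    have heq : (fun t => v s t) = fun t => ∑ k ∈ Finset.Icc 1 p, a2 k * m s ^ k * V t ^ k :=
      funext (hv s)
    rw [heq]; exact poly_hasDerivAt p hp a2 (m s) _ V t₀ hV0 hVd
  have h3 : HasDerivAt (fun t => w s t) (a3 1 * q s * deriv W t₀) t₀ := by
    have heq : (fun t => w s t) = fun t => ∑ k ∈ Finset.Icc 1 p, a3 k * q s ^ k * W t ^ k :=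
      funext (hw s)
    rw [heq]; exact poly_hasDerivAt p hp a3 (q s) _ W t₀ hW0 hWd
  have hPs : (fun t' => P s t') = fun t' => r s + u s t' • T s + v s t' • N s + w s t' • B s :=
    funext (hP s)
  have hdt : HasDerivAt (fun t' => P s t')
      ((a1 1 * l s * deriv U t₀) • T s + (a2 1 * m s * deriv V t₀) • N s
        + (a3 1 * q s * deriv W t₀) • B s) t₀ := by
    rw [hPs]
    have := (((hasDerivAt_const t₀ (r s)).fun_add (h1.smul_const (T s))).fun_add
      (h2.smul_const (N s))).fun_add (h3.smul_const (B s))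
    simpa [add_assoc] using this
  refine ⟨by rw [hP, hu0, hv0, hw0]; simp, ?_⟩
  rw [hn, hds, hdt.deriv]
  have hTB : lcross (T s) (B s) = N s := by rw [lcross_swap, hBxT]; simp
  rw [lcross_expand, hTxN s, hTB, hV', hW']
  rw [smul_add, smul_smul, smul_smul]
  abel
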